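/- arXiv:2505.18407 — 7 statements merged into one kernel-verified Lean document; each statement's English description precedes it below -/
import Mathlib

section
/- Let A be a finite set, π₀ a positive probability distribution on A, η > 0, and r(·;D) a dataset-dependent utility. Suppose A is partitioned into I and its complement Ī such that (1) every a ∈ I has action-dependent sensitivity at most Δ, i.e. |r(a;D) − r(a;D')| ≤ Δ for all D' with ‖D − D'‖₁ ≤ 1, and (2) for every dataset D' with ‖D − D'‖₁ ≤ 1, the total probability that the policy π̃(·;D') (proportional to π₀(a)exp(r(a;D')/η)) assigns to Ī is at most δ₀ < 1. Then for every neighboring dataset D' and every subset S ⊆ A, Pr[π̃(·;D) ∈ S] ≤ (1/(1−δ₀))·exp(2Δ/η)·Pr[π̃(·;D') ∈ S] + δ₀; that is, the sampling mechanism is (2Δ/η − log(1−δ₀), δ₀)-approximately differentially private. -/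
def Neighbor {Ω : Type*} (D D' : Multiset Ω) : Prop :=
  (∃ x, D' = x ::ₘ D) ∨ (∃ x, D = x ::ₘ D')

/-!
On the bounded-sensitivity actions `I` the unnormalized Gibbs weights `π₀ a * exp (r a D / η)`
of neighboring datasets differ by a factor of at most `exp (Δ / η)` in either direction. Since
`I` carries mass at least `1 - δ₀` under the neighboring policy, the normalizing constants
differ by at most `exp (Δ / η) / (1 - δ₀)`, so on `I` the two policies have ratio at most
`exp (2Δ / η) / (1 - δ₀)`. Outside `I` the policy has mass at most `δ₀`, which is the additive
slack.
-/

open Finset Real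

section

variable {A : Type*} [Fintype A] [DecidableEq A]

theorem sum_le_mul_sum_add_of_le_mul_on {p q : A → ℝ} {I : Finset A} {K δ : ℝ}
    (hp : ∀ a, 0 ≤ p a) (hq : ∀ a, 0 ≤ q a) (hK : 0 ≤ K)
    (hpq : ∀ a ∈ I, p a ≤ K * q a) (htail : ∑ a ∈ Iᶜ, p a ≤ δ) (S : Finset A) :
    ∑ a ∈ S, p a ≤ K * ∑ a ∈ S, q a + δ := by
  rw [← sum_inter_add_sum_sdiff S I]
  gcongr ?_ + ?_
  · calc ∑ a ∈ S ∩ I, p a ≤ ∑ a ∈ S ∩ I, K * q a :=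
          sum_le_sum fun a ha => hpq a (mem_inter.mp ha).2
      _ = K * ∑ a ∈ S ∩ I, q a := (mul_sum _ _ _).symm
      _ ≤ K * ∑ a ∈ S, q a :=
          mul_le_mul_of_nonneg_left
            (sum_le_sum_of_subset_of_nonneg inter_subset_left fun a _ _ => hq a) hK
  · calc ∑ a ∈ S \ I, p a ≤ ∑ a ∈ Iᶜ, p a :=
          sum_le_sum_of_subset_of_nonneg (fun a ha => mem_compl.mpr (mem_sdiff.mp ha).2)
            fun a _ _ => hp a
      _ ≤ δ := htail

theorem one_sub_mul_sum_le_mul_sum {w w' : A → ℝ} {I : Finset A} {c δ : ℝ}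
    (hw : ∀ a, 0 ≤ w a) (hZ' : 0 < ∑ a, w' a) (hc : 0 ≤ c)
    (hcomp : ∀ a ∈ I, w' a ≤ c * w a) (htail : ∑ a ∈ Iᶜ, w' a / ∑ b, w' b ≤ δ) :
    (1 - δ) * ∑ a, w' a ≤ c * ∑ a, w a := by
  rw [← sum_div, div_le_iff₀ hZ'] at htail
  calc (1 - δ) * ∑ a, w' a ≤ ∑ a ∈ I, w' a := by
        rw [← sum_add_sum_compl I w'] at htail ⊢
        linarith
    _ ≤ ∑ a ∈ I, c * w a := sum_le_sum hcomp
    _ = c * ∑ a ∈ I, w a := (mul_sum _ _ _).symm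
    _ ≤ c * ∑ a, w a :=
        mul_le_mul_of_nonneg_left
          (sum_le_sum_of_subset_of_nonneg (subset_univ I) fun a _ _ => hw a) hc

theorem div_sum_le_mul_div_sum_of_mem {w w' : A → ℝ} {I : Finset A} {c c' δ : ℝ}
    (hw : ∀ a, 0 < w a) (hw' : ∀ a, 0 < w' a) (hc : 0 ≤ c) (hc' : 0 ≤ c') (hδ : δ < 1)
    (hle : ∀ a ∈ I, w a ≤ c * w' a) (hge : ∀ a ∈ I, w' a ≤ c' * w a)
    (htail : ∑ a ∈ Iᶜ, w' a / ∑ b, w' b ≤ δ) {a : A} (ha : a ∈ I) :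
    w a / ∑ b, w b ≤ 1 / (1 - δ) * (c * c') * (w' a / ∑ b, w' b) := by
  have hZ : 0 < ∑ b, w b := sum_pos (fun b _ => hw b) ⟨a, mem_univ a⟩
  have hZ' : 0 < ∑ b, w' b := sum_pos (fun b _ => hw' b) ⟨a, mem_univ a⟩
  have hmass := one_sub_mul_sum_le_mul_sum (fun b => (hw b).le) hZ' hc' hge htail
  have hcross : w a * ((1 - δ) * ∑ b, w' b) ≤ c * w' a * (c' * ∑ b, w b) :=
    mul_le_mul (hle a ha) hmass (mul_nonneg (by linarith) hZ'.le) (mul_nonneg hc (hw' a).le)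
  rw [div_le_iff₀ hZ]
  field_simp
  rw [le_div_iff₀ (by linarith)]
  linarith

end

theorem mul_exp_div_le_exp_mul {p x y Δ η : ℝ} (hp : 0 ≤ p) (hη : 0 < η) (h : x - y ≤ Δ) :
    p * exp (x / η) ≤ exp (Δ / η) * (p * exp (y / η)) := by
  rw [mul_left_comm, ← exp_add, ← add_div]
  gcongr
  linarith

theorem stmt1_general {A Ω : Type*} [Fintype A] [DecidableEq A]
    (r : A → Multiset Ω → ℝ) (π₀ : A → ℝ) (hπ₀pos : ∀ a, 0 < π₀ a)
    (η : ℝ) (hη : 0 < η)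
    (pol : Multiset Ω → A → ℝ)
    (hpol : ∀ D a, pol D a =
      π₀ a * Real.exp (r a D / η) / ∑ a', π₀ a' * Real.exp (r a' D / η))
    (D : Multiset Ω) (I : Finset A) (Δ δ₀ : ℝ) (hδ₀ : δ₀ < 1)
    (hsens : ∀ a ∈ I, ∀ D' : Multiset Ω, (Neighbor D D' ∨ D' = D) → |r a D - r a D'| ≤ Δ)
    (htail : ∀ D' : Multiset Ω, (Neighbor D D' ∨ D' = D) → ∑ a ∈ Iᶜ, pol D' a ≤ δ₀) :
    ∀ D' : Multiset Ω, Neighbor D D' → ∀ S : Finset A,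
      ∑ a ∈ S, pol D a ≤
        (1 / (1 - δ₀)) * Real.exp (2 * Δ / η) * ∑ a ∈ S, pol D' a + δ₀ := by
  intro D' hD' S
  have hw : ∀ E a, 0 < π₀ a * exp (r a E / η) := fun E a => mul_pos (hπ₀pos a) (exp_pos _)
  have hpol_nonneg : ∀ E a, 0 ≤ pol E a := fun E a => by
    rw [hpol]; exact div_nonneg (hw E a).le (sum_nonneg fun b _ => (hw E b).le)
  have hK : 0 ≤ 1 / (1 - δ₀) * exp (2 * Δ / η) :=
    mul_nonneg (one_div_nonneg.mpr (by linarith)) (exp_pos _).le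
  have hratio : ∀ a ∈ I, pol D a ≤ 1 / (1 - δ₀) * exp (2 * Δ / η) * pol D' a := by
    have htail' := htail D' (Or.inl hD')
    simp only [hpol] at htail' ⊢
    intro a ha
    rw [two_mul, add_div, exp_add]
    refine div_sum_le_mul_div_sum_of_mem (hw D) (hw D') (exp_pos _).le (exp_pos _).le hδ₀
      (fun b hb => ?_) (fun b hb => ?_) htail' ha
    · exact mul_exp_div_le_exp_mul (hπ₀pos b).le hη
        ((le_abs_self _).trans (hsens b hb D' (Or.inl hD')))
    · exact mul_exp_div_le_exp_mul (hπ₀pos b).le hη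
        ((le_abs_self _).trans ((abs_sub_comm _ _).trans_le (hsens b hb D' (Or.inl hD'))))
  exact sum_le_mul_sum_add_of_le_mul_on (hpol_nonneg D) (hpol_nonneg D') hK hratio
    (htail D (Or.inr rfl)) S

/-- Approximate DP of KL-regularized sampling with a set `I` of bounded-sensitivity
actions and low-probability tail `Iᶜ`. -/
theorem stmt1 {A Ω : Type*} [Fintype A] [DecidableEq A]
    (r : A → Multiset Ω → ℝ) (π₀ : A → ℝ) (hπ₀pos : ∀ a, 0 < π₀ a)
    (hπ₀sum : ∑ a, π₀ a = 1) (η : ℝ) (hη : 0 < η)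
    (pol : Multiset Ω → A → ℝ)
    (hpol : ∀ D a, pol D a =
      π₀ a * Real.exp (r a D / η) / ∑ a', π₀ a' * Real.exp (r a' D / η))
    (D : Multiset Ω) (I : Finset A) (Δ δ₀ : ℝ) (hδ₀ : δ₀ < 1)
    (hsens : ∀ a ∈ I, ∀ D' : Multiset Ω, (Neighbor D D' ∨ D' = D) → |r a D - r a D'| ≤ Δ)
    (htail : ∀ D' : Multiset Ω, (Neighbor D D' ∨ D' = D) → ∑ a ∈ Iᶜ, pol D' a ≤ δ₀) :
    ∀ D' : Multiset Ω, Neighbor D D' → ∀ S : Finset A,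
      ∑ a ∈ S, pol D a ≤
        (1 / (1 - δ₀)) * Real.exp (2 * Δ / η) * ∑ a ∈ S, pol D' a + δ₀ :=
  stmt1_general r π₀ hπ₀pos η hη pol hpol D I Δ δ₀ hδ₀ hsens htail
end

section
/- Let π̃ and π̂ be probability distributions on a finite set A such that D_∞(π̃‖π̂) ≤ ε̂ and D_∞(π̂‖π̃) ≤ ε̂, where D_∞(π₁‖π₂) = max_{a∈A} log(π₁(a)/π₂(a)), and this holds for every dataset D. If the mechanism that samples from π̃(·;D) is (ε,δ)-differentially private, then the mechanism that samples from π̂(·;D) is (ε + 2ε̂, e^{ε̂}δ)-differentially private. -/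
open Real Finset

lemma le_exp_mul_of_log_div_le {p q ε : ℝ} (hp : 0 < p) (hq : 0 < q) (h : log (p / q) ≤ ε) :
    p ≤ exp ε * q := by
  rwa [Real.log_le_iff_le_exp (div_pos hp hq), div_le_iff₀ hq] at h

lemma sum_le_exp_mul_sum_of_log_div_le {ι : Type*} (S : Finset ι) {p q : ι → ℝ} {ε : ℝ}
    (hp : ∀ i, 0 < p i) (hq : ∀ i, 0 < q i) (h : ∀ i, log (p i / q i) ≤ ε) :
    ∑ i ∈ S, p i ≤ exp ε * ∑ i ∈ S, q i := by
  rw [mul_sum]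
  exact sum_le_sum fun i _ => le_exp_mul_of_log_div_le (hp i) (hq i) (h i)

lemma le_exp_add_two_mul_mul_add_of_le {x y z w ε η δ : ℝ} (hxy : x ≤ exp η * y)
    (hyz : y ≤ exp ε * z + δ) (hzw : z ≤ exp η * w) :
    x ≤ exp (ε + 2 * η) * w + exp η * δ := by
  have hz : exp ε * z ≤ exp ε * (exp η * w) := mul_le_mul_of_nonneg_left hzw (exp_pos ε).le
  calc x ≤ exp η * y := hxy
    _ ≤ exp η * (exp ε * (exp η * w) + δ) :=
        mul_le_mul_of_nonneg_left (by linarith) (exp_pos η).le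
    _ = exp (ε + 2 * η) * w + exp η * δ := by
        rw [two_mul, exp_add, exp_add]
        ring

theorem stmt4_general {A Ω : Type*} [Fintype A]
    (πt πh : Multiset Ω → A → ℝ) (εh ε δ : ℝ)
    (hpos1 : ∀ D a, 0 < πt D a) (hpos2 : ∀ D a, 0 < πh D a)
    (hdiv1 : ∀ D a, Real.log (πt D a / πh D a) ≤ εh)
    (hdiv2 : ∀ D a, Real.log (πh D a / πt D a) ≤ εh)
    (hDP : ∀ D D', Neighbor D D' → ∀ S : Finset A,
      ∑ a ∈ S, πt D a ≤ Real.exp ε * ∑ a ∈ S, πt D' a + δ) :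
    ∀ D D', Neighbor D D' → ∀ S : Finset A,
      ∑ a ∈ S, πh D a ≤
        Real.exp (ε + 2 * εh) * ∑ a ∈ S, πh D' a + Real.exp εh * δ := by
  intro D D' hN S
  exact le_exp_add_two_mul_mul_add_of_le
    (sum_le_exp_mul_sum_of_log_div_le S (hpos2 D) (hpos1 D) (hdiv2 D))
    (hDP D D' hN S)
    (sum_le_exp_mul_sum_of_log_div_le S (hpos1 D') (hpos2 D') (hdiv1 D'))

/-- Inexact policy optimization: if `πh` is within max-divergence `εh` of the
`(ε,δ)`-DP policy `πt` (for every dataset), then sampling from `πh` is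
`(ε + 2εh, e^{εh} δ)`-DP. -/
theorem stmt4 {A Ω : Type*} [Fintype A]
    (πt πh : Multiset Ω → A → ℝ) (εh ε δ : ℝ)
    (hpos1 : ∀ D a, 0 < πt D a) (hpos2 : ∀ D a, 0 < πh D a)
    (hsum1 : ∀ D, ∑ a, πt D a = 1) (hsum2 : ∀ D, ∑ a, πh D a = 1)
    (hdiv1 : ∀ D a, Real.log (πt D a / πh D a) ≤ εh)
    (hdiv2 : ∀ D a, Real.log (πh D a / πt D a) ≤ εh)
    (hDP : ∀ D D', Neighbor D D' → ∀ S : Finset A,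
      ∑ a ∈ S, πt D a ≤ Real.exp ε * ∑ a ∈ S, πt D' a + δ) :
    ∀ D D', Neighbor D D' → ∀ S : Finset A,
      ∑ a ∈ S, πh D a ≤
        Real.exp (ε + 2 * εh) * ∑ a ∈ S, πh D' a + Real.exp εh * δ :=
  stmt4_general πt πh εh ε δ hpos1 hpos2 hdiv1 hdiv2 hDP
end

section
/- Consider a multi-armed bandit with arm set A, rewards in [0,R], and a dataset D with min_a N(a;D) > 1. Let π̃(a;D) ∝ π₀(a)·exp((r̄(a;D) − β₀/√(N(a;D)))/η) where r̄ is the empirical mean reward, β₀ ≥ 0, η > 0, and π₀ is a positive reference distribution. Then sampling a single action from π̃(·;D) is ε₀-differentially private with ε₀ = (1/η)·(4R/(min_a N(a;D) − 1) + β₀/(min_a N(a;D) − 1)^{3/2}). -/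
open scoped Classical

/-- Number of data points in `D` whose arm is `a`. -/
def armCount {A : Type*} [DecidableEq A] (a : A) (D : Multiset (A × ℝ)) : ℕ :=
  (D.filter (fun p => p.1 = a)).card

/-- Empirical mean reward of arm `a` in dataset `D`. -/
noncomputable def empMean {A : Type*} [DecidableEq A] (a : A) (D : Multiset (A × ℝ)) : ℝ :=
  (D.map (fun p => if p.1 = a then p.2 else 0)).sum / (armCount a D : ℝ)

/-- The pessimistic KL-regularized optimal policy
`π̃(a;D) ∝ π₀(a) exp((r̄(a;D) − β₀/√N(a;D))/η)`. -/
noncomputable def banditPolicy {A : Type*} [Fintype A] [DecidableEq A]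
    (π₀ : A → ℝ) (η β₀ : ℝ) (D : Multiset (A × ℝ)) (a : A) : ℝ :=
  π₀ a * Real.exp ((empMean a D - β₀ / Real.sqrt (armCount a D)) / η) /
    ∑ a', π₀ a' * Real.exp ((empMean a' D - β₀ / Real.sqrt (armCount a' D)) / η)

/-! When one sample is added to a dataset in which arm `a` has `N ≥ 1` samples, its empirical
mean moves by at most `R/(N+1)` and `1/√N` by at most `1/(2 N^{3/2})`. For neighbours of `D` the
smaller dataset has `N ≥ K := min_a N(a;D) - 1`, so every exponent of the policy moves by at most
`c = (2R/K + β₀/(2K^{3/2}))/η`. This scales the unnormalized weight of any set of arms, and the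
normalizer, by factors in `[e^{-c}, e^c]`, hence its probability by a factor at most `e^{2c}`. -/

theorem sum_mul_exp_le_exp_mul_sum {ι : Type*} {s : Finset ι} {w f g : ι → ℝ} {c : ℝ}
    (hw : ∀ a ∈ s, 0 ≤ w a) (hfg : ∀ a ∈ s, f a ≤ g a + c) :
    ∑ a ∈ s, w a * Real.exp (f a) ≤ Real.exp c * ∑ a ∈ s, w a * Real.exp (g a) := by
  rw [Finset.mul_sum]
  refine Finset.sum_le_sum fun a ha => ?_
  calc w a * Real.exp (f a) ≤ w a * Real.exp (g a + c) := by gcongr; exacts [hw a ha, hfg a ha]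
    _ = Real.exp c * (w a * Real.exp (g a)) := by rw [Real.exp_add]; ring

theorem sum_gibbs_le_exp_two_mul_sum_gibbs {ι : Type*} [Fintype ι] [Nonempty ι] {w f g : ι → ℝ}
    {c : ℝ} (hw : ∀ a, 0 < w a) (hfg : ∀ a, |f a - g a| ≤ c) (S : Finset ι) :
    ∑ a ∈ S, w a * Real.exp (f a) / ∑ b, w b * Real.exp (f b) ≤
      Real.exp (2 * c) * ∑ a ∈ S, w a * Real.exp (g a) / ∑ b, w b * Real.exp (g b) := by
  have hZf : 0 < ∑ b, w b * Real.exp (f b) :=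
    Finset.sum_pos (fun a _ => by have := hw a; positivity) Finset.univ_nonempty
  have hZg : 0 < ∑ b, w b * Real.exp (g b) :=
    Finset.sum_pos (fun a _ => by have := hw a; positivity) Finset.univ_nonempty
  have hnum : ∑ a ∈ S, w a * Real.exp (f a) ≤ Real.exp c * ∑ a ∈ S, w a * Real.exp (g a) :=
    sum_mul_exp_le_exp_mul_sum (fun a _ => (hw a).le)
      fun a _ => by linarith [(abs_le.mp (hfg a)).2]
  have hden : ∑ b, w b * Real.exp (g b) ≤ Real.exp c * ∑ b, w b * Real.exp (f b) :=
    sum_mul_exp_le_exp_mul_sum (fun a _ => (hw a).le)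
      fun a _ => by linarith [(abs_le.mp (hfg a)).1]
  rw [← Finset.sum_div, ← Finset.sum_div, mul_div_assoc', div_le_div_iff₀ hZf hZg, two_mul,
    Real.exp_add]
  have hSg : 0 ≤ ∑ a ∈ S, w a * Real.exp (g a) :=
    Finset.sum_nonneg fun a _ => by have := hw a; positivity
  calc (∑ a ∈ S, w a * Real.exp (f a)) * ∑ b, w b * Real.exp (g b)
      ≤ (Real.exp c * ∑ a ∈ S, w a * Real.exp (g a)) * (Real.exp c * ∑ b, w b * Real.exp (f b)) := by
        gcongr
    _ = _ := by ring

theorem one_div_sqrt_sub_one_div_sqrt_add_one_le {m : ℝ} (hm : 0 < m) :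
    1 / √m - 1 / √(m + 1) ≤ 1 / (2 * m ^ ((3 : ℝ) / 2)) := by
  set u := √m with hu_def
  set v := √(m + 1)
  have hu : 0 < u := Real.sqrt_pos.mpr hm
  have hv : 0 < v := Real.sqrt_pos.mpr (by linarith)
  have huv : u ≤ v := Real.sqrt_le_sqrt (by linarith)
  have hu2 : u * u = m := Real.mul_self_sqrt hm.le
  have hv2 : v * v = m + 1 := Real.mul_self_sqrt (by linarith)
  have hm32 : m ^ ((3 : ℝ) / 2) = u ^ 3 := by
    rw [hu_def, Real.sqrt_eq_rpow, ← Real.rpow_natCast, ← Real.rpow_mul hm.le]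
    norm_num
  -- rationalizing: `1/u - 1/v = (v - u)/(u v) = 1/(u v (u + v))` since `v² - u² = 1`
  have hdiff : 1 / u - 1 / v = 1 / (u * v * (u + v)) := by
    rw [div_sub_div _ _ hu.ne' hv.ne', div_eq_div_iff (by positivity) (by positivity)]
    linear_combination (u * v) * (hv2 - hu2)
  rw [hdiff, hm32]
  exact one_div_le_one_div_of_le (by positivity) (by nlinarith [mul_pos hu hu])

theorem abs_add_div_add_one_sub_div_le {m s r R : ℝ} (hm : 0 ≤ m) (hs : s ∈ Set.Icc 0 (m * R))
    (hr : r ∈ Set.Icc 0 R) :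
    |(r + s) / (m + 1) - s / m| ≤ R / (m + 1) := by
  rcases hm.eq_or_lt with rfl | hm
  · obtain rfl : s = 0 := by simpa using hs
    simpa [abs_of_nonneg hr.1] using hr.2
  have hdiff : (r + s) / (m + 1) - s / m = (m * r - s) / m / (m + 1) := by
    field_simp
    ring
  rw [hdiff, abs_div, abs_of_pos (by linarith : 0 < m + 1), abs_div, abs_of_pos hm]
  gcongr
  rw [div_le_iff₀ hm, abs_le]
  constructor <;> nlinarith [hs.1, hs.2, hr.1, hr.2]

section Bandit

variable {A : Type*} [DecidableEq A]

def armRewardSum (a : A) (D : Multiset (A × ℝ)) : ℝ :=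
  (D.map fun p => if p.1 = a then p.2 else 0).sum

noncomputable def pessimisticReward (β₀ : ℝ) (a : A) (D : Multiset (A × ℝ)) : ℝ :=
  empMean a D - β₀ / √(armCount a D)

theorem armCount_cons (a : A) (x : A × ℝ) (D : Multiset (A × ℝ)) :
    armCount a (x ::ₘ D) = armCount a D + if x.1 = a then 1 else 0 := by
  by_cases h : x.1 = a <;> simp [armCount, h, add_comm]

theorem armRewardSum_cons (a : A) (x : A × ℝ) (D : Multiset (A × ℝ)) :
    armRewardSum a (x ::ₘ D) = (if x.1 = a then x.2 else 0) + armRewardSum a D := by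
  simp [armRewardSum]

theorem armRewardSum_mem_Icc {R : ℝ} (a : A) {D : Multiset (A × ℝ)}
    (hD : ∀ p ∈ D, p.2 ∈ Set.Icc 0 R) :
    armRewardSum a D ∈ Set.Icc 0 (armCount a D * R) := by
  induction D using Multiset.induction with
  | empty => simp [armRewardSum, armCount]
  | cons x D ih =>
    obtain ⟨hx0, hxR⟩ := hD x (Multiset.mem_cons_self x D)
    obtain ⟨ih0, ihR⟩ := ih fun p hp => hD p (Multiset.mem_cons_of_mem hp)
    rw [armRewardSum_cons, armCount_cons]
    by_cases h : x.1 = a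
    · simp only [h, if_true, Nat.cast_add, Nat.cast_one]
      constructor <;> linarith
    · simp only [h, if_false, add_zero, zero_add]
      exact ⟨ih0, ihR⟩

theorem abs_empMean_cons_sub_le {R : ℝ} (a : A) {x : A × ℝ} {D : Multiset (A × ℝ)}
    (hx : x.2 ∈ Set.Icc 0 R) (hD : ∀ p ∈ D, p.2 ∈ Set.Icc 0 R) :
    |empMean a (x ::ₘ D) - empMean a D| ≤ R / (armCount a D + 1) := by
  change |armRewardSum a (x ::ₘ D) / _ - armRewardSum a D / _| ≤ _
  rw [armRewardSum_cons, armCount_cons]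
  by_cases h : x.1 = a
  · simp only [h, if_true, Nat.cast_add, Nat.cast_one]
    exact abs_add_div_add_one_sub_div_le (Nat.cast_nonneg _) (armRewardSum_mem_Icc a hD) hx
  · simp only [h, if_false, add_zero, zero_add, sub_self, abs_zero]
    exact div_nonneg (hx.1.trans hx.2) (by positivity)

theorem one_div_sqrt_armCount_cons_sub_mem_Icc (a : A) (x : A × ℝ) {D : Multiset (A × ℝ)}
    (hD : 0 < armCount a D) :
    1 / √(armCount a D) - 1 / √(armCount a (x ::ₘ D)) ∈
      Set.Icc 0 (1 / (2 * (armCount a D : ℝ) ^ ((3 : ℝ) / 2))) := by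
  have hm : (0 : ℝ) < armCount a D := Nat.cast_pos.mpr hD
  rw [armCount_cons]
  by_cases h : x.1 = a
  · simp only [h, if_true, Nat.cast_add, Nat.cast_one]
    refine ⟨sub_nonneg.mpr ?_, one_div_sqrt_sub_one_div_sqrt_add_one_le hm⟩
    exact one_div_le_one_div_of_le (Real.sqrt_pos.mpr hm) (Real.sqrt_le_sqrt (by linarith))
  · simp only [h, if_false, add_zero, sub_self]
    exact ⟨le_rfl, by positivity⟩

theorem abs_pessimisticReward_cons_sub_le {R β₀ : ℝ} (hβ₀ : 0 ≤ β₀) (a : A) {x : A × ℝ}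
    {D : Multiset (A × ℝ)} (hx : x.2 ∈ Set.Icc 0 R) (hD : ∀ p ∈ D, p.2 ∈ Set.Icc 0 R)
    (hN : 0 < armCount a D) :
    |pessimisticReward β₀ a (x ::ₘ D) - pessimisticReward β₀ a D| ≤
      R / (armCount a D + 1) + β₀ / (2 * (armCount a D : ℝ) ^ ((3 : ℝ) / 2)) := by
  obtain ⟨hsqrt0, hsqrt⟩ := one_div_sqrt_armCount_cons_sub_mem_Icc a x hN
  have hsplit : pessimisticReward β₀ a (x ::ₘ D) - pessimisticReward β₀ a D =
      (empMean a (x ::ₘ D) - empMean a D) +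
        β₀ * (1 / √(armCount a D) - 1 / √(armCount a (x ::ₘ D))) := by
    simp only [pessimisticReward]
    ring
  calc _ ≤ |empMean a (x ::ₘ D) - empMean a D| +
        β₀ * (1 / √(armCount a D) - 1 / √(armCount a (x ::ₘ D))) := by
        rw [hsplit]
        exact (abs_add_le _ _).trans_eq (by rw [abs_of_nonneg (mul_nonneg hβ₀ hsqrt0)])
    _ ≤ _ := by
        rw [div_eq_mul_one_div β₀]
        gcongr
        exact abs_empMean_cons_sub_le a hx hD

theorem abs_pessimisticReward_sub_le_of_neighbor {R β₀ : ℝ} (hβ₀ : 0 ≤ β₀)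
    {D D' : Multiset (A × ℝ)} (hDD' : Neighbor D D') (hD : ∀ p ∈ D, p.2 ∈ Set.Icc 0 R)
    (hD' : ∀ p ∈ D', p.2 ∈ Set.Icc 0 R) {n : ℕ} (hn : 1 < n) (hN : ∀ a, n ≤ armCount a D)
    (a : A) :
    |pessimisticReward β₀ a D - pessimisticReward β₀ a D'| ≤
      2 * R / ((n : ℝ) - 1) + β₀ / (2 * ((n : ℝ) - 1) ^ ((3 : ℝ) / 2)) := by
  have hK : (0 : ℝ) < n - 1 := by
    have : (2 : ℝ) ≤ n := by exact_mod_cast hn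
    linarith
  have hcons : ∀ {x : A × ℝ} {E : Multiset (A × ℝ)}, x.2 ∈ Set.Icc 0 R →
      (∀ p ∈ E, p.2 ∈ Set.Icc 0 R) → (n : ℝ) - 1 ≤ armCount a E →
      |pessimisticReward β₀ a (x ::ₘ E) - pessimisticReward β₀ a E| ≤
        2 * R / ((n : ℝ) - 1) + β₀ / (2 * ((n : ℝ) - 1) ^ ((3 : ℝ) / 2)) := by
    intro x E hx hE hKE
    have hR : 0 ≤ R := hx.1.trans hx.2
    have hE0 : 0 < armCount a E := by exact_mod_cast hK.trans_le hKE
    refine (abs_pessimisticReward_cons_sub_le hβ₀ a hx hE hE0).trans (add_le_add ?_ ?_)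
    · calc R / (armCount a E + 1) ≤ R / ((n : ℝ) - 1) :=
            div_le_div_of_nonneg_left hR hK (by linarith)
        _ ≤ 2 * R / ((n : ℝ) - 1) := by
            rw [mul_div_assoc]
            linarith [div_nonneg hR hK.le]
    · gcongr
  rcases hDD' with ⟨x, rfl⟩ | ⟨x, rfl⟩
  · rw [abs_sub_comm]
    exact hcons (hD' x (Multiset.mem_cons_self x D)) hD (by
      have : (n : ℝ) ≤ armCount a D := by exact_mod_cast hN a
      linarith)
  · refine hcons (hD x (Multiset.mem_cons_self x D')) hD' ?_
    have : (n : ℝ) ≤ armCount a (x ::ₘ D') := by exact_mod_cast hN a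
    rw [armCount_cons] at this
    split_ifs at this <;> push_cast at this <;> linarith

end Bandit

theorem stmt7_general {A : Type*} [Fintype A] [DecidableEq A] [Nonempty A]
    (R η β₀ : ℝ) (hη : 0 < η) (hβ₀ : 0 ≤ β₀) (π₀ : A → ℝ)
    (hπ₀pos : ∀ a, 0 < π₀ a)
    (D : Multiset (A × ℝ)) (hrew : ∀ p ∈ D, p.2 ∈ Set.Icc 0 R)
    (Nmin : ℕ) (hNmin : Nmin = Finset.univ.inf' Finset.univ_nonempty fun a => armCount a D)
    (hcov : 1 < Nmin) :
    ∀ D' : Multiset (A × ℝ), Neighbor D D' →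
      (∀ p ∈ D', p.2 ∈ Set.Icc 0 R) →
      ∀ S : Finset A,
        (∑ a ∈ S, banditPolicy π₀ η β₀ D a ≤
          Real.exp ((1 / η) * (4 * R / ((Nmin : ℝ) - 1) +
              β₀ / ((Nmin : ℝ) - 1) ^ ((3 : ℝ) / 2))) *
            ∑ a ∈ S, banditPolicy π₀ η β₀ D' a) ∧
        (∑ a ∈ S, banditPolicy π₀ η β₀ D' a ≤
          Real.exp ((1 / η) * (4 * R / ((Nmin : ℝ) - 1) +
              β₀ / ((Nmin : ℝ) - 1) ^ ((3 : ℝ) / 2))) *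
            ∑ a ∈ S, banditPolicy π₀ η β₀ D a) := by
  intro D' hDD' hrew' S
  have hN : ∀ a, Nmin ≤ armCount a D := fun a => hNmin ▸ Finset.inf'_le _ (Finset.mem_univ a)
  set c := 2 * R / ((Nmin : ℝ) - 1) + β₀ / (2 * ((Nmin : ℝ) - 1) ^ ((3 : ℝ) / 2))
  have hsens : ∀ a, |pessimisticReward β₀ a D / η - pessimisticReward β₀ a D' / η| ≤ c / η := by
    intro a
    rw [← sub_div, abs_div, abs_of_pos hη]
    gcongr
    exact abs_pessimisticReward_sub_le_of_neighbor hβ₀ hDD' hrew hrew' hcov hN a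
  have hε : (1 / η) * (4 * R / ((Nmin : ℝ) - 1) + β₀ / ((Nmin : ℝ) - 1) ^ ((3 : ℝ) / 2)) =
      2 * (c / η) := by ring
  rw [hε]
  exact ⟨sum_gibbs_le_exp_two_mul_sum_gibbs hπ₀pos hsens S,
    sum_gibbs_le_exp_two_mul_sum_gibbs hπ₀pos (fun a => (abs_sub_comm _ _).trans_le (hsens a)) S⟩

/-- Pure DP for multi-armed bandits with full coverage: sampling one action from
the pessimistic KL-regularized policy is `ε₀`-DP with
`ε₀ = (1/η)(4R/(min_a N(a;D)−1) + β₀/(min_a N(a;D)−1)^{3/2})`. -/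
theorem stmt7 {A : Type*} [Fintype A] [DecidableEq A] [Nonempty A]
    (R η β₀ : ℝ) (hη : 0 < η) (hβ₀ : 0 ≤ β₀) (π₀ : A → ℝ)
    (hπ₀pos : ∀ a, 0 < π₀ a) (hπ₀sum : ∑ a, π₀ a = 1)
    (D : Multiset (A × ℝ)) (hrew : ∀ p ∈ D, p.2 ∈ Set.Icc 0 R)
    (Nmin : ℕ) (hNmin : Nmin = Finset.univ.inf' Finset.univ_nonempty fun a => armCount a D)
    (hcov : 1 < Nmin) :
    ∀ D' : Multiset (A × ℝ), Neighbor D D' →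
      (∀ p ∈ D', p.2 ∈ Set.Icc 0 R) →
      ∀ S : Finset A,
        (∑ a ∈ S, banditPolicy π₀ η β₀ D a ≤
          Real.exp ((1 / η) * (4 * R / ((Nmin : ℝ) - 1) +
              β₀ / ((Nmin : ℝ) - 1) ^ ((3 : ℝ) / 2))) *
            ∑ a ∈ S, banditPolicy π₀ η β₀ D' a) ∧
        (∑ a ∈ S, banditPolicy π₀ η β₀ D' a ≤
          Real.exp ((1 / η) * (4 * R / ((Nmin : ℝ) - 1) +
              β₀ / ((Nmin : ℝ) - 1) ^ ((3 : ℝ) / 2))) *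
            ∑ a ∈ S, banditPolicy π₀ η β₀ D a) :=
  stmt7_general R η β₀ hη hβ₀ π₀ hπ₀pos D hrew Nmin hNmin hcov
end

section
/- Let λ > 0 and Σ_D = λI + Σ_{i=1}^{n−1} φ_i φ_iᵀ with ‖φ_i‖₂ ≤ 1 for all i, and let b = Σ_i r_i φ_i with r_i ∈ [0,R]. Then bᵀ Σ_D⁻¹ φ ≤ √((n−1)d)·R·‖φ‖_{Σ_D⁻¹} for any vector φ; in particular, since ‖φ_i‖_{Σ_D⁻¹} ≤ 1/√(λ_min(Σ_D)), we get bᵀ Σ_D⁻¹ φ ≤ √((n−1)d/λ_min(Σ_D))·R when ‖φ‖₂ ≤ 1. -/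
/-!
With `G = λI + ∑ᵢ φᵢφᵢᵀ` positive definite, the leverages sum to
`∑ᵢ φᵢᵀG⁻¹φᵢ = tr (G⁻¹(G - λI)) = d - λ tr G⁻¹ ≤ d`. Cauchy–Schwarz in the `G⁻¹` inner product
gives `φᵢᵀG⁻¹ψ ≤ ‖φᵢ‖_{G⁻¹} ‖ψ‖_{G⁻¹}`, and Cauchy–Schwarz over `i` gives
`∑ᵢ ‖φᵢ‖_{G⁻¹} ≤ √(n d)`. For the second bound, `w = G⁻¹ψ` satisfies
`λ_min ‖w‖² ≤ wᵀGw = ψᵀw ≤ ‖ψ‖ ‖w‖`, whence `ψᵀG⁻¹ψ ≤ ‖ψ‖² / λ_min`.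
-/

open Matrix

namespace Matrix

variable {m ι : Type*} [Fintype m] [Fintype ι]

theorem PosSemidef.dotProduct_mulVec_le_sqrt_mul_sqrt {B : Matrix m m ℝ} (hB : B.PosSemidef)
    (x y : m → ℝ) : x ⬝ᵥ (B *ᵥ y) ≤ √(x ⬝ᵥ (B *ᵥ x)) * √(y ⬝ᵥ (B *ᵥ y)) := by
  let := B.toSeminormedAddCommGroup hB
  let := B.toInnerProductSpace hB
  have h := real_inner_le_norm x y
  rw [norm_eq_sqrt_real_inner, norm_eq_sqrt_real_inner] at h
  change (B *ᵥ y) ⬝ᵥ x ≤ √((B *ᵥ x) ⬝ᵥ x) * √((B *ᵥ y) ⬝ᵥ y) at h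
  simpa only [dotProduct_comm _ x, dotProduct_comm _ y] using h

theorem dotProduct_sq_le_dotProduct_self_mul (x y : m → ℝ) :
    (x ⬝ᵥ y) ^ 2 ≤ (x ⬝ᵥ x) * (y ⬝ᵥ y) := by
  simpa only [dotProduct, sq] using Finset.sum_mul_sq_le_sq_mul_sq Finset.univ x y

theorem trace_mul_vecMulVec_self {R : Type*} [CommSemiring R] (M : Matrix m m R) (u : m → R) :
    trace (M * vecMulVec u u) = u ⬝ᵥ (M *ᵥ u) := by
  rw [mul_vecMulVec, trace_vecMulVec, dotProduct_comm]

theorem sum_smul_dotProduct_mulVec_le {B : Matrix m m ℝ} (hB : B.PosSemidef) {φ : ι → m → ℝ}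
    {r : ι → ℝ} {R : ℝ} (hr : ∀ i, r i ∈ Set.Icc 0 R) {D : ℝ}
    (hD : ∑ i, φ i ⬝ᵥ (B *ᵥ φ i) ≤ D) (ψ : m → ℝ) :
    (∑ i, r i • φ i) ⬝ᵥ (B *ᵥ ψ) ≤ √(Fintype.card ι * D) * R * √(ψ ⬝ᵥ (B *ᵥ ψ)) := by
  rcases isEmpty_or_nonempty ι with _ | ⟨⟨i₀⟩⟩
  · simp
  have hR : 0 ≤ R := (hr i₀).1.trans (hr i₀).2
  have hφ_nonneg : ∀ i, 0 ≤ φ i ⬝ᵥ (B *ᵥ φ i) := fun i => by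
    simpa using hB.dotProduct_mulVec_nonneg (φ i)
  have hsum_sqrt : ∑ i, √(φ i ⬝ᵥ (B *ᵥ φ i)) ≤ √(Fintype.card ι * D) := by
    calc ∑ i, √(φ i ⬝ᵥ (B *ᵥ φ i)) = ∑ i, √1 * √(φ i ⬝ᵥ (B *ᵥ φ i)) := by simp
      _ ≤ √(∑ _i : ι, 1) * √(∑ i, φ i ⬝ᵥ (B *ᵥ φ i)) :=
        Real.sum_sqrt_mul_sqrt_le _ (fun _ => zero_le_one) hφ_nonneg
      _ ≤ √(Fintype.card ι * D) := by
        rw [← Real.sqrt_mul (by positivity), Finset.sum_const, Finset.card_univ, nsmul_one]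
        exact Real.sqrt_le_sqrt (mul_le_mul_of_nonneg_left hD (Nat.cast_nonneg _))
  calc (∑ i, r i • φ i) ⬝ᵥ (B *ᵥ ψ) = ∑ i, r i * (φ i ⬝ᵥ (B *ᵥ ψ)) := by
        simp only [sum_dotProduct, smul_dotProduct, smul_eq_mul]
    _ ≤ ∑ i, R * (√(φ i ⬝ᵥ (B *ᵥ φ i)) * √(ψ ⬝ᵥ (B *ᵥ ψ))) := by
        refine Finset.sum_le_sum fun i _ => ?_
        exact (mul_le_mul_of_nonneg_left (hB.dotProduct_mulVec_le_sqrt_mul_sqrt _ _) (hr i).1).trans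
          (mul_le_mul_of_nonneg_right (hr i).2 (by positivity))
    _ = (∑ i, √(φ i ⬝ᵥ (B *ᵥ φ i))) * R * √(ψ ⬝ᵥ (B *ᵥ ψ)) := by
        rw [Finset.sum_mul, Finset.sum_mul]
        exact Finset.sum_congr rfl fun i _ => by ring
    _ ≤ √(Fintype.card ι * D) * R * √(ψ ⬝ᵥ (B *ᵥ ψ)) := by gcongr

variable [DecidableEq m]

theorem dotProduct_inv_mulVec_self_le {A : Matrix m m ℝ} (hA : IsUnit A.det)
    {c : ℝ} (hc : 0 < c) (hcA : ∀ v, c * (v ⬝ᵥ v) ≤ v ⬝ᵥ (A *ᵥ v)) (ψ : m → ℝ) :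
    ψ ⬝ᵥ (A⁻¹ *ᵥ ψ) ≤ (ψ ⬝ᵥ ψ) / c := by
  set w := A⁻¹ *ᵥ ψ
  have hAw : A *ᵥ w = ψ := by rw [mulVec_mulVec, mul_nonsing_inv A hA, one_mulVec]
  have hlower : c * (w ⬝ᵥ w) ≤ ψ ⬝ᵥ w := by
    simpa only [hAw, dotProduct_comm w] using hcA w
  have hww : 0 ≤ w ⬝ᵥ w := by simpa using dotProduct_star_self_nonneg w
  have hCS := dotProduct_sq_le_dotProduct_self_mul ψ w
  rw [le_div_iff₀ hc]
  have hψψ : 0 ≤ ψ ⬝ᵥ ψ := by simpa using dotProduct_star_self_nonneg ψ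
  nlinarith [mul_le_mul_of_nonneg_left hlower hψψ, mul_le_mul_of_nonneg_left hCS hc.le]

def ridgeGram (lam : ℝ) (φ : ι → m → ℝ) : Matrix m m ℝ :=
  lam • 1 + ∑ i, vecMulVec (φ i) (φ i)

theorem ridgeGram_posDef {lam : ℝ} (hlam : 0 < lam) (φ : ι → m → ℝ) :
    (ridgeGram lam φ).PosDef :=
  (PosDef.one.smul hlam).add_posSemidef <|
    posSemidef_sum _ fun i _ => by simpa using posSemidef_vecMulVec_self_star (φ i)

theorem sum_dotProduct_ridgeGram_inv_mulVec_le_card {lam : ℝ} (hlam : 0 < lam) (φ : ι → m → ℝ) :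
    ∑ i, φ i ⬝ᵥ ((ridgeGram lam φ)⁻¹ *ᵥ φ i) ≤ Fintype.card m := by
  have hG := ridgeGram_posDef hlam φ
  have htrace : ∑ i, φ i ⬝ᵥ ((ridgeGram lam φ)⁻¹ *ᵥ φ i) =
      Fintype.card m - lam * trace (ridgeGram lam φ)⁻¹ := by
    calc ∑ i, φ i ⬝ᵥ ((ridgeGram lam φ)⁻¹ *ᵥ φ i)
        = trace ((ridgeGram lam φ)⁻¹ * (ridgeGram lam φ - lam • 1)) := by
          simp only [ridgeGram, add_sub_cancel_left, Finset.mul_sum, trace_sum,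
            trace_mul_vecMulVec_self]
      _ = Fintype.card m - lam * trace (ridgeGram lam φ)⁻¹ := by
          rw [mul_sub, nonsing_inv_mul _ ((isUnit_iff_isUnit_det _).mp hG.isUnit), mul_smul_comm,
            mul_one, trace_sub, trace_one, trace_smul, smul_eq_mul]
  rw [htrace]
  linarith [mul_nonneg hlam.le hG.posSemidef.inv.trace_nonneg]

end Matrix

theorem stmt11_general {d n : ℕ} (lam R : ℝ) (hlam : 0 < lam)
    (φ : Fin n → Fin d → ℝ)
    (r : Fin n → ℝ) (hr : ∀ i, r i ∈ Set.Icc 0 R)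
    (lamMin : ℝ) (hmin : 0 < lamMin)
    (hray : ∀ v : Fin d → ℝ,
      lamMin * (v ⬝ᵥ v) ≤
        v ⬝ᵥ ((lam • (1 : Matrix (Fin d) (Fin d) ℝ) +
          ∑ i, vecMulVec (φ i) (φ i)) *ᵥ v)) :
    (∀ ψ : Fin d → ℝ,
      (∑ i, r i • φ i) ⬝ᵥ
          ((lam • (1 : Matrix (Fin d) (Fin d) ℝ) + ∑ i, vecMulVec (φ i) (φ i))⁻¹ *ᵥ ψ) ≤
        Real.sqrt ((n : ℝ) * d) * R *
          Real.sqrt (ψ ⬝ᵥ ((lam • (1 : Matrix (Fin d) (Fin d) ℝ) +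
            ∑ i, vecMulVec (φ i) (φ i))⁻¹ *ᵥ ψ))) ∧
    (∀ ψ : Fin d → ℝ, ψ ⬝ᵥ ψ ≤ 1 →
      (∑ i, r i • φ i) ⬝ᵥ
          ((lam • (1 : Matrix (Fin d) (Fin d) ℝ) + ∑ i, vecMulVec (φ i) (φ i))⁻¹ *ᵥ ψ) ≤
        Real.sqrt ((n : ℝ) * d / lamMin) * R) := by
  have hG := ridgeGram_posDef hlam φ
  have hleverage : ∑ i, φ i ⬝ᵥ ((ridgeGram lam φ)⁻¹ *ᵥ φ i) ≤ (d : ℝ) := by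
    simpa only [Fintype.card_fin] using sum_dotProduct_ridgeGram_inv_mulVec_le_card hlam φ
  have hbound : ∀ ψ, (∑ i, r i • φ i) ⬝ᵥ ((ridgeGram lam φ)⁻¹ *ᵥ ψ) ≤
      √(n * d) * R * √(ψ ⬝ᵥ ((ridgeGram lam φ)⁻¹ *ᵥ ψ)) := by
    simpa only [Fintype.card_fin] using sum_smul_dotProduct_mulVec_le hG.posSemidef.inv hr hleverage
  refine ⟨hbound, fun ψ hψ => (hbound ψ).trans ?_⟩
  have hcoeff : 0 ≤ √(n * d) * R := by
    rcases n.eq_zero_or_pos with rfl | hn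
    · simp
    · exact mul_nonneg (Real.sqrt_nonneg _) ((hr ⟨0, hn⟩).1.trans (hr ⟨0, hn⟩).2)
  have hquad : ψ ⬝ᵥ ((ridgeGram lam φ)⁻¹ *ᵥ ψ) ≤ 1 / lamMin :=
    (dotProduct_inv_mulVec_self_le ((isUnit_iff_isUnit_det _).mp hG.isUnit) hmin hray ψ).trans
      (by gcongr)
  calc √(n * d) * R * √(ψ ⬝ᵥ ((ridgeGram lam φ)⁻¹ *ᵥ ψ)) ≤ √(n * d) * R * √(1 / lamMin) := by
        gcongr
    _ = √(n * d / lamMin) * R := by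
        rw [Real.sqrt_div' _ hmin.le, Real.sqrt_div' _ hmin.le, Real.sqrt_one]
        ring

/-- Bound on the ridge-regression term `bᵀ Σ_D⁻¹ φ`. -/
theorem stmt11 {d n : ℕ} (lam R : ℝ) (hlam : 0 < lam)
    (φ : Fin n → Fin d → ℝ) (hφ : ∀ i, φ i ⬝ᵥ φ i ≤ 1)
    (r : Fin n → ℝ) (hr : ∀ i, r i ∈ Set.Icc 0 R)
    (lamMin : ℝ) (hmin : 0 < lamMin)
    (hray : ∀ v : Fin d → ℝ,
      lamMin * (v ⬝ᵥ v) ≤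
        v ⬝ᵥ ((lam • (1 : Matrix (Fin d) (Fin d) ℝ) +
          ∑ i, vecMulVec (φ i) (φ i)) *ᵥ v)) :
    (∀ ψ : Fin d → ℝ,
      (∑ i, r i • φ i) ⬝ᵥ
          ((lam • (1 : Matrix (Fin d) (Fin d) ℝ) + ∑ i, vecMulVec (φ i) (φ i))⁻¹ *ᵥ ψ) ≤
        Real.sqrt ((n : ℝ) * d) * R *
          Real.sqrt (ψ ⬝ᵥ ((lam • (1 : Matrix (Fin d) (Fin d) ℝ) +
            ∑ i, vecMulVec (φ i) (φ i))⁻¹ *ᵥ ψ))) ∧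
    (∀ ψ : Fin d → ℝ, ψ ⬝ᵥ ψ ≤ 1 →
      (∑ i, r i • φ i) ⬝ᵥ
          ((lam • (1 : Matrix (Fin d) (Fin d) ℝ) + ∑ i, vecMulVec (φ i) (φ i))⁻¹ *ᵥ ψ) ≤
        Real.sqrt ((n : ℝ) * d / lamMin) * R) :=
  stmt11_general lam R hlam φ r hr lamMin hmin hray
end

section
/- Let Σ_D be symmetric positive definite with minimum eigenvalue λ_min ≥ 2, and let φ₀ satisfy ‖φ₀‖₂ ≤ 1 with Σ₋ = Σ_D − φ₀φ₀ᵀ positive definite. Then for any vector φ, ‖φ‖_{Σ₋⁻¹} − ‖φ‖_{Σ_D⁻¹} ≤ (1/(2(λ_min − 1)))·‖φ‖_{Σ_D⁻¹}. -/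
/-!
Write `s = φ₀ᵀ Σ_D⁻¹ φ₀`. Cauchy–Schwarz and the Rayleigh bound give `λ_min s ≤ ‖φ₀‖² ≤ 1`.
For `u = Σ₋⁻¹ φ` one has `uᵀ Σ_D u = φᵀ Σ₋⁻¹ φ + (φ₀ᵀ u)²`, and Cauchy–Schwarz in the `Σ_D` inner
product gives `(φ₀ᵀ u)² ≤ s · uᵀ Σ_D u` and `(φᵀ u)² ≤ φᵀ Σ_D⁻¹ φ · uᵀ Σ_D u`; together
`(1 - s) ‖φ‖²_{Σ₋⁻¹} ≤ ‖φ‖²_{Σ_D⁻¹}`. Hence `‖φ‖²_{Σ₋⁻¹} ≤ λ/(λ - 1) · ‖φ‖²_{Σ_D⁻¹}`, and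
`√(λ/(λ - 1)) ≤ 1 + 1/(2(λ - 1))`.
-/

open Matrix

/-- The norm `‖u‖_M = √(uᵀ M u)` induced by a positive definite matrix `M`. -/
noncomputable def mnorm {d : ℕ} (M : Matrix (Fin d) (Fin d) ℝ) (u : Fin d → ℝ) : ℝ :=
  Real.sqrt (u ⬝ᵥ (M *ᵥ u))

section QuadraticForm

variable {n : Type*} [Fintype n]

theorem sq_dotProduct_mulVec_le {M : Matrix n n ℝ} (hM : M.PosSemidef) (x y : n → ℝ) :
    (x ⬝ᵥ M *ᵥ y) ^ 2 ≤ (x ⬝ᵥ M *ᵥ x) * (y ⬝ᵥ M *ᵥ y) := by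
  let := M.toSeminormedAddCommGroup hM
  let := M.toInnerProductSpace hM
  have inner_eq (u v : n → ℝ) : inner ℝ u v = u ⬝ᵥ M *ᵥ v := dotProduct_comm _ _
  simpa only [inner_eq, sq] using real_inner_mul_inner_self_le x y

theorem dotProduct_vecMulVec_mulVec {R : Type*} [CommSemiring R] (a u : n → R) :
    u ⬝ᵥ vecMulVec a a *ᵥ u = (a ⬝ᵥ u) ^ 2 := by
  rw [vecMulVec_mulVec]
  simp [dotProduct_comm u, sq]

variable [DecidableEq n]

theorem mulVec_inv_mulVec_of_isUnit {R : Type*} [CommRing R] {M : Matrix n n R} (hM : IsUnit M)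
    (x : n → R) : M *ᵥ (M⁻¹ *ᵥ x) = x := by
  rw [mulVec_mulVec, mul_nonsing_inv M ((isUnit_iff_isUnit_det M).1 hM), one_mulVec]

theorem sq_dotProduct_le_mul_inv {M : Matrix n n ℝ} (hM : M.PosDef) (x y : n → ℝ) :
    (x ⬝ᵥ y) ^ 2 ≤ (x ⬝ᵥ M⁻¹ *ᵥ x) * (y ⬝ᵥ M *ᵥ y) := by
  have := sq_dotProduct_mulVec_le hM.posSemidef y (M⁻¹ *ᵥ x)
  rwa [mulVec_inv_mulVec_of_isUnit hM.isUnit, dotProduct_comm y, dotProduct_comm _ x,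
    mul_comm] at this

theorem mul_dotProduct_inv_mulVec_le {M : Matrix n n ℝ} (hM : M.PosDef) {lam : ℝ}
    (hlam : 0 ≤ lam) (hray : ∀ v, lam * (v ⬝ᵥ v) ≤ v ⬝ᵥ M *ᵥ v) (x : n → ℝ) :
    lam * (x ⬝ᵥ M⁻¹ *ᵥ x) ≤ x ⬝ᵥ x := by
  set w := M⁻¹ *ᵥ x
  have hs : 0 ≤ x ⬝ᵥ w := hM.inv.posSemidef.dotProduct_mulVec_nonneg x
  have hxx : 0 ≤ x ⬝ᵥ x := dotProduct_star_self_nonneg x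
  have hMw : w ⬝ᵥ M *ᵥ w = x ⬝ᵥ w := by
    rw [mulVec_inv_mulVec_of_isUnit hM.isUnit, dotProduct_comm]
  have hcs : (x ⬝ᵥ w) ^ 2 ≤ (x ⬝ᵥ x) * (w ⬝ᵥ w) := by
    simpa using sq_dotProduct_mulVec_le PosSemidef.one x w
  have hquad : lam * (x ⬝ᵥ w) * (x ⬝ᵥ w) ≤ (x ⬝ᵥ x) * (x ⬝ᵥ w) := by
    nlinarith [mul_le_mul_of_nonneg_left hcs hlam, mul_le_mul_of_nonneg_left (hray w) hxx]
  rcases hs.eq_or_lt with hs0 | hspos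
  · simp [← hs0, hxx]
  · exact le_of_mul_le_mul_right hquad hspos

theorem one_sub_mul_dotProduct_inv_sub_vecMulVec_le {A : Matrix n n ℝ} (hA : A.PosDef)
    {a : n → ℝ} (hB : (A - vecMulVec a a).PosDef) (x : n → ℝ) :
    (1 - a ⬝ᵥ A⁻¹ *ᵥ a) * (x ⬝ᵥ (A - vecMulVec a a)⁻¹ *ᵥ x) ≤ x ⬝ᵥ A⁻¹ *ᵥ x := by
  set B := A - vecMulVec a a
  set s := a ⬝ᵥ A⁻¹ *ᵥ a
  set P := x ⬝ᵥ A⁻¹ *ᵥ x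
  set u := B⁻¹ *ᵥ x
  set t := u ⬝ᵥ A *ᵥ u
  have hBu : B *ᵥ u = x := mulVec_inv_mulVec_of_isUnit hB.isUnit x
  have hP : 0 ≤ P := hA.inv.posSemidef.dotProduct_mulVec_nonneg x
  have hQ : 0 ≤ x ⬝ᵥ u := hB.inv.posSemidef.dotProduct_mulVec_nonneg x
  have ht_eq : t = x ⬝ᵥ u + (a ⬝ᵥ u) ^ 2 := by
    have : u ⬝ᵥ B *ᵥ u = t - (a ⬝ᵥ u) ^ 2 := by
      rw [sub_mulVec, dotProduct_sub, dotProduct_vecMulVec_mulVec]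
    rw [hBu, dotProduct_comm] at this
    linarith
  have hau : (a ⬝ᵥ u) ^ 2 ≤ s * t := sq_dotProduct_le_mul_inv hA a u
  have hxu : (x ⬝ᵥ u) ^ 2 ≤ P * t := sq_dotProduct_le_mul_inv hA x u
  rcases le_or_gt (1 - s) 0 with hs | hs
  · nlinarith
  rcases hQ.eq_or_lt with hQ0 | hQpos
  · simp [← hQ0, hP]
  refine le_of_mul_le_mul_right ?_ hQpos
  calc (1 - s) * (x ⬝ᵥ u) * (x ⬝ᵥ u) ≤ (1 - s) * (P * t) := by
        rw [mul_assoc, ← sq]; exact mul_le_mul_of_nonneg_left hxu hs.le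
    _ = P * ((1 - s) * t) := by ring
    _ ≤ P * (x ⬝ᵥ u) := mul_le_mul_of_nonneg_left (by nlinarith) hP

end QuadraticForm

theorem sqrt_sub_sqrt_le_of_mul_le {lam P Q : ℝ} (hlam : 1 < lam) (hP : 0 ≤ P)
    (hQ : (lam - 1) * Q ≤ lam * P) :
    √Q - √P ≤ 1 / (2 * (lam - 1)) * √P := by
  set c := 1 / (2 * (lam - 1))
  have hc : 2 * c * (lam - 1) = 1 := by
    simp only [c]
    field_simp [(sub_pos.2 hlam).ne']
  have hc0 : 0 ≤ c := by positivity
  suffices √Q ≤ (1 + c) * √P by linarith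
  rw [Real.sqrt_le_left (by positivity), mul_pow, Real.sq_sqrt hP]
  refine le_of_mul_le_mul_left ?_ (sub_pos.2 hlam)
  nlinarith [mul_nonneg (mul_nonneg (sub_pos.2 hlam).le (sq_nonneg c)) hP]

/-- Sensitivity bound for the elliptical potential under a rank-one downdate. -/
theorem stmt14 {d : ℕ} (SigD : Matrix (Fin d) (Fin d) ℝ) (φ₀ : Fin d → ℝ)
    (hSig : SigD.PosDef) (hφ₀ : φ₀ ⬝ᵥ φ₀ ≤ 1)
    (hSigM : (SigD - vecMulVec φ₀ φ₀).PosDef)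
    (lamMin : ℝ) (hlam : 2 ≤ lamMin)
    (hray : ∀ v : Fin d → ℝ, lamMin * (v ⬝ᵥ v) ≤ v ⬝ᵥ (SigD *ᵥ v)) :
    ∀ φ : Fin d → ℝ,
      mnorm (SigD - vecMulVec φ₀ φ₀)⁻¹ φ - mnorm SigD⁻¹ φ ≤
        (1 / (2 * (lamMin - 1))) * mnorm SigD⁻¹ φ := by
  intro φ
  have hs : lamMin * (φ₀ ⬝ᵥ SigD⁻¹ *ᵥ φ₀) ≤ 1 :=
    (mul_dotProduct_inv_mulVec_le hSig (by linarith) hray φ₀).trans hφ₀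
  have hdown := one_sub_mul_dotProduct_inv_sub_vecMulVec_le hSig hSigM φ
  have hQ : 0 ≤ φ ⬝ᵥ (SigD - vecMulVec φ₀ φ₀)⁻¹ *ᵥ φ :=
    hSigM.inv.posSemidef.dotProduct_mulVec_nonneg φ
  refine sqrt_sub_sqrt_le_of_mul_le (by linarith)
    (hSig.inv.posSemidef.dotProduct_mulVec_nonneg φ) ?_
  nlinarith [mul_le_mul_of_nonneg_left hdown (by linarith : (0 : ℝ) ≤ lamMin)]
end

section
/- Let Σ_D be symmetric positive definite and Σ₊ = Σ_D + φ₀φ₀ᵀ with ‖φ₀‖₂ ≤ 1. Then for any vector φ, 0 ≤ ‖φ‖_{Σ_D⁻¹} − ‖φ‖_{Σ₊⁻¹} ≤ (1/2)·‖φ₀‖_{Σ_D⁻¹}·‖φ‖_{Σ_D⁻¹}·‖φ₀‖_{Σ_D⁻¹} ≤ (1/(2λ_min(Σ_D)))·‖φ‖_{Σ_D⁻¹}. -/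
/-!
By Sherman–Morrison, `φᵀ (Σ_D + φ₀ φ₀ᵀ)⁻¹ φ = a - s² / (1 + c)` with `a = ‖φ‖²_{Σ_D⁻¹}`,
`c = ‖φ₀‖²_{Σ_D⁻¹}` and `s = ⟨φ, φ₀⟩_{Σ_D⁻¹}`. Cauchy–Schwarz `s² ≤ a c` squeezes this between
`a / (1 + c)` and `a`, and `1 - (1 + c)^(-1/2) ≤ c / 2` turns the lower bound into the middle
inequality. For the last one, `λ_min ‖v‖²_{Σ_D⁻¹} ≤ ‖v‖²` gives `λ_min c ≤ ‖φ₀‖² ≤ 1`.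
-/

open Matrix

theorem one_sub_inv_sqrt_one_add_le {c : ℝ} (hc : 0 ≤ c) : 1 - (√(1 + c))⁻¹ ≤ c / 2 := by
  have hu : 1 ≤ √(1 + c) := Real.one_le_sqrt.mpr (by linarith)
  have huu : √(1 + c) ^ 2 = 1 + c := Real.sq_sqrt (by linarith)
  -- with `u = √(1 + c)`: `c / 2 * u - (u - 1) = (u - 1)² (u + 2) / 2`
  have key : √(1 + c) - 1 ≤ c / 2 * √(1 + c) := by
    nlinarith [mul_nonneg (sq_nonneg (√(1 + c) - 1)) (show 0 ≤ √(1 + c) + 2 by linarith)]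
  rw [← div_le_iff₀ (by linarith), sub_div, div_self (by positivity), one_div] at key
  exact key

theorem sqrt_sub_sqrt_le_of_div_le {a b c : ℝ} (hc : 0 ≤ c) (hab : a / (1 + c) ≤ b) :
    √a - √b ≤ c / 2 * √a := by
  have hb : √a / √(1 + c) ≤ √b := by
    rw [← Real.sqrt_div' _ (by linarith)]; exact Real.sqrt_le_sqrt hab
  have := mul_le_mul_of_nonneg_right (one_sub_inv_sqrt_one_add_le hc) (Real.sqrt_nonneg a)
  rw [div_eq_mul_inv] at hb
  linarith

namespace Matrix

variable {n : Type*} [Fintype n]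

theorem inv_add_vecMulVec [DecidableEq n] {K : Type*} [Field K] {A : Matrix n n K}
    (hA : IsUnit A.det) (u v : n → K) (h : 1 + v ⬝ᵥ (A⁻¹ *ᵥ u) ≠ 0) :
    (A + vecMulVec u v)⁻¹ =
      A⁻¹ - (1 + v ⬝ᵥ (A⁻¹ *ᵥ u))⁻¹ • vecMulVec (A⁻¹ *ᵥ u) (v ᵥ* A⁻¹) := by
  apply inv_eq_right_inv
  have hinv : A * A⁻¹ = 1 := mul_nonsing_inv A hA
  have ht : (1 + v ⬝ᵥ (A⁻¹ *ᵥ u))⁻¹ * (v ⬝ᵥ (A⁻¹ *ᵥ u)) = 1 - (1 + v ⬝ᵥ (A⁻¹ *ᵥ u))⁻¹ := by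
    field_simp; ring
  rw [add_mul, mul_sub, mul_sub, Matrix.mul_smul, Matrix.mul_smul, hinv, mul_vecMulVec,
    mulVec_mulVec, hinv, one_mulVec, vecMulVec_mul, vecMulVec_mul_vecMulVec, vecMulVec_smul,
    smul_smul, ht, sub_smul, one_smul]
  abel

theorem PosSemidef.dotProduct_mulVec_sq_le {M : Matrix n n ℝ} (hM : M.PosSemidef) (x y : n → ℝ) :
    (x ⬝ᵥ (M *ᵥ y)) ^ 2 ≤ (x ⬝ᵥ (M *ᵥ x)) * (y ⬝ᵥ (M *ᵥ y)) := by
  let _ := M.toSeminormedAddCommGroup hM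
  let _ := M.toInnerProductSpace hM
  have h := real_inner_mul_inner_self_le x y
  change (M *ᵥ y) ⬝ᵥ star x * ((M *ᵥ y) ⬝ᵥ star x) ≤
    ((M *ᵥ x) ⬝ᵥ star x) * ((M *ᵥ y) ⬝ᵥ star y) at h
  simpa only [star_trivial, dotProduct_comm _ x, dotProduct_comm _ y, sq] using h

theorem PosSemidef.dotProduct_mulVec_self_nonneg {M : Matrix n n ℝ} (hM : M.PosSemidef)
    (x : n → ℝ) : 0 ≤ x ⬝ᵥ (M *ᵥ x) := by
  simpa only [star_trivial] using hM.dotProduct_mulVec_nonneg x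

theorem PosDef.dotProduct_inv_add_vecMulVec_self_mulVec [DecidableEq n] {M : Matrix n n ℝ}
    (hM : M.PosDef) (u x : n → ℝ) :
    x ⬝ᵥ ((M + vecMulVec u u)⁻¹ *ᵥ x) =
      x ⬝ᵥ (M⁻¹ *ᵥ x) - (x ⬝ᵥ (M⁻¹ *ᵥ u)) ^ 2 / (1 + u ⬝ᵥ (M⁻¹ *ᵥ u)) := by
  have hc : 0 < 1 + u ⬝ᵥ (M⁻¹ *ᵥ u) := by
    linarith [hM.inv.posSemidef.dotProduct_mulVec_self_nonneg u]
  have hsymm : u ᵥ* M⁻¹ = M⁻¹ *ᵥ u := by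
    rw [← mulVec_transpose, ← conjTranspose_eq_transpose_of_trivial, hM.inv.isHermitian.eq]
  rw [inv_add_vecMulVec hM.det_pos.ne'.isUnit u u hc.ne', sub_mulVec, dotProduct_sub, smul_mulVec,
    dotProduct_smul, vecMulVec_mulVec, hsymm, dotProduct_comm (M⁻¹ *ᵥ u) x]
  simp only [MulOpposite.smul_eq_mul_unop, MulOpposite.unop_op, dotProduct_smul, smul_eq_mul]
  ring

theorem PosDef.mul_dotProduct_inv_mulVec_le [DecidableEq n] {M : Matrix n n ℝ} (hM : M.PosDef)
    {lam : ℝ} (hlam : ∀ v, lam * (v ⬝ᵥ v) ≤ v ⬝ᵥ (M *ᵥ v)) (v : n → ℝ) :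
    lam * (v ⬝ᵥ (M⁻¹ *ᵥ v)) ≤ v ⬝ᵥ v := by
  -- with `q = vᵀ M⁻¹ v`: `lam ‖w‖² ≤ q` and `q² ≤ ‖v‖² ‖w‖²`, hence `lam q² ≤ ‖v‖² q`
  set w := M⁻¹ *ᵥ v
  have hvv : 0 ≤ v ⬝ᵥ v := by simpa using dotProduct_star_self_nonneg v
  have hq : 0 ≤ v ⬝ᵥ w := hM.inv.posSemidef.dotProduct_mulVec_self_nonneg v
  rcases le_or_gt lam 0 with hlam0 | hlam0
  · nlinarith
  have hw : lam * (w ⬝ᵥ w) ≤ v ⬝ᵥ w := by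
    simpa [w, mulVec_mulVec, mul_nonsing_inv M hM.det_pos.ne'.isUnit, dotProduct_comm w v]
      using hlam w
  have hcs : (v ⬝ᵥ w) ^ 2 ≤ (v ⬝ᵥ v) * (w ⬝ᵥ w) := by
    simpa using PosSemidef.one.dotProduct_mulVec_sq_le v w
  rcases hq.eq_or_lt with hq0 | hq0
  · rw [← hq0, mul_zero]; exact hvv
  · refine le_of_mul_le_mul_right ?_ hq0
    nlinarith

end Matrix

/-- Sensitivity bound for the elliptical potential under a rank-one update. -/
theorem stmt15 {d : ℕ} (SigD : Matrix (Fin d) (Fin d) ℝ) (φ₀ : Fin d → ℝ)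
    (hSig : SigD.PosDef) (hφ₀ : φ₀ ⬝ᵥ φ₀ ≤ 1)
    (lamMin : ℝ) (hlamMin : 0 < lamMin)
    (hray : ∀ v : Fin d → ℝ, lamMin * (v ⬝ᵥ v) ≤ v ⬝ᵥ (SigD *ᵥ v)) :
    ∀ φ : Fin d → ℝ,
      0 ≤ mnorm SigD⁻¹ φ - mnorm (SigD + vecMulVec φ₀ φ₀)⁻¹ φ ∧
      mnorm SigD⁻¹ φ - mnorm (SigD + vecMulVec φ₀ φ₀)⁻¹ φ ≤
        (1 / 2) * mnorm SigD⁻¹ φ₀ * mnorm SigD⁻¹ φ * mnorm SigD⁻¹ φ₀ ∧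
      (1 / 2) * mnorm SigD⁻¹ φ₀ * mnorm SigD⁻¹ φ * mnorm SigD⁻¹ φ₀ ≤
        (1 / (2 * lamMin)) * mnorm SigD⁻¹ φ := by
  intro φ
  set c := φ₀ ⬝ᵥ (SigD⁻¹ *ᵥ φ₀)
  set a := φ ⬝ᵥ (SigD⁻¹ *ᵥ φ)
  set s := φ ⬝ᵥ (SigD⁻¹ *ᵥ φ₀)
  have hc : 0 ≤ c := hSig.inv.posSemidef.dotProduct_mulVec_self_nonneg φ₀
  have hcs : s ^ 2 ≤ a * c := hSig.inv.posSemidef.dotProduct_mulVec_sq_le φ φ₀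
  have hlc : lamMin * c ≤ 1 := (hSig.mul_dotProduct_inv_mulVec_le hray φ₀).trans hφ₀
  have hupdate : mnorm (SigD + vecMulVec φ₀ φ₀)⁻¹ φ = √(a - s ^ 2 / (1 + c)) := by
    rw [mnorm, hSig.dotProduct_inv_add_vecMulVec_self_mulVec]
  have hrhs : 1 / 2 * mnorm SigD⁻¹ φ₀ * mnorm SigD⁻¹ φ * mnorm SigD⁻¹ φ₀ = c / 2 * √a := by
    change 1 / 2 * √c * √a * √c = _
    linear_combination √a / 2 * Real.mul_self_sqrt hc
  rw [hupdate, hrhs, mnorm]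
  refine ⟨sub_nonneg.mpr (Real.sqrt_le_sqrt (sub_le_self _ (by positivity))),
    sqrt_sub_sqrt_le_of_div_le hc ?_, mul_le_mul_of_nonneg_right ?_ (Real.sqrt_nonneg a)⟩
  · calc a / (1 + c) = a - a * c / (1 + c) := by field_simp; ring
      _ ≤ a - s ^ 2 / (1 + c) := by gcongr
  · rw [div_le_div_iff₀ (by norm_num) (by positivity)]
    linarith
end

section
/- Let Σ_D be symmetric positive definite, and φ₀ with ‖φ₀‖₂ ≤ 1. Write Σ₋ = Σ_D − φ₀φ₀ᵀ (assumed positive definite) and Σ₊ = Σ_D + φ₀φ₀ᵀ. Then for any φ: ‖φ‖_{Σ_D⁻¹} ≤ ‖φ‖_{Σ₋⁻¹} ≤ ‖φ‖_{Σ_D⁻¹}/√(1 − 1/λ_min(Σ_D)) and ‖φ‖_{Σ_D⁻¹}/√(1 + 1/λ_min(Σ_D)) ≤ ‖φ‖_{Σ₊⁻¹} ≤ ‖φ‖_{Σ_D⁻¹}. -/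
/-!
Each of the four bounds is an instance of the antitonicity of `A ↦ A⁻¹` in the Loewner order,
applied to `Σ₋ ≤ Σ_D`, `(1 - 1/λ) Σ_D ≤ Σ₋`, `Σ_D ≤ Σ₊` and `Σ₊ ≤ (1 + 1/λ) Σ_D`. The two scaled
comparisons come from `(φ₀ ⬝ᵥ v)² ≤ ‖v‖² ≤ vᵀ Σ_D v / λ` (Cauchy–Schwarz and `‖φ₀‖ ≤ 1`).
Antitonicity itself follows from the variational formula
`uᵀ A⁻¹ u = max_v (2 uᵀ v - vᵀ A v)`, attained at `v = A⁻¹ u`.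
-/

open Matrix

section QuadraticForm

variable {n : Type*} [Fintype n]

lemma Matrix.IsHermitian.dotProduct_mulVec_comm {A : Matrix n n ℝ} (hA : A.IsHermitian)
    (x y : n → ℝ) : x ⬝ᵥ (A *ᵥ y) = y ⬝ᵥ (A *ᵥ x) := by
  rw [dotProduct_mulVec, ← mulVec_transpose, ← conjTranspose_eq_transpose_of_trivial, hA.eq,
    dotProduct_comm]

lemma dotProduct_vecMulVec_self_mulVec (a v : n → ℝ) :
    v ⬝ᵥ (vecMulVec a a *ᵥ v) = (a ⬝ᵥ v) ^ 2 := by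
  rw [vecMulVec_mulVec, op_smul_eq_smul, dotProduct_smul, smul_eq_mul,
    dotProduct_comm, sq]

lemma sq_dotProduct_le_dotProduct_self {a : n → ℝ} (ha : a ⬝ᵥ a ≤ 1) (v : n → ℝ) :
    (a ⬝ᵥ v) ^ 2 ≤ v ⬝ᵥ v := by
  have hcs : (a ⬝ᵥ v) ^ 2 ≤ (a ⬝ᵥ a) * (v ⬝ᵥ v) := by
    simpa only [dotProduct, sq] using Finset.sum_mul_sq_le_sq_mul_sq Finset.univ a v
  have hv : 0 ≤ v ⬝ᵥ v := by simpa using dotProduct_self_star_nonneg v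
  nlinarith

variable [DecidableEq n]

lemma two_mul_dotProduct_sub_le_dotProduct_inv_mulVec {A : Matrix n n ℝ} (hA : A.PosDef)
    (u v : n → ℝ) : 2 * (u ⬝ᵥ v) - v ⬝ᵥ (A *ᵥ v) ≤ u ⬝ᵥ (A⁻¹ *ᵥ u) := by
  set y := A⁻¹ *ᵥ u
  have hAy : A *ᵥ y = u := by
    rw [mulVec_mulVec, mul_nonsing_inv A ((isUnit_iff_isUnit_det A).mp hA.isUnit), one_mulVec]
  have hsq : 0 ≤ (v - y) ⬝ᵥ (A *ᵥ (v - y)) := by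
    simpa using hA.posSemidef.dotProduct_mulVec_nonneg (v - y)
  have hsym := hA.isHermitian.dotProduct_mulVec_comm y v
  simp only [mulVec_sub, dotProduct_sub, sub_dotProduct, hAy] at hsq hsym
  rw [dotProduct_comm u v, dotProduct_comm u y]
  linarith

lemma dotProduct_inv_mulVec_anti {A B : Matrix n n ℝ} (hA : A.PosDef) (hB : IsUnit B)
    (hAB : ∀ v, v ⬝ᵥ (A *ᵥ v) ≤ v ⬝ᵥ (B *ᵥ v)) (u : n → ℝ) :
    u ⬝ᵥ (B⁻¹ *ᵥ u) ≤ u ⬝ᵥ (A⁻¹ *ᵥ u) := by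
  set x := B⁻¹ *ᵥ u
  have hBx : B *ᵥ x = u := by
    rw [mulVec_mulVec, mul_nonsing_inv B ((isUnit_iff_isUnit_det B).mp hB), one_mulVec]
  calc u ⬝ᵥ x = 2 * (u ⬝ᵥ x) - x ⬝ᵥ (B *ᵥ x) := by rw [hBx, dotProduct_comm x u]; ring
    _ ≤ 2 * (u ⬝ᵥ x) - x ⬝ᵥ (A *ᵥ x) := sub_le_sub_left (hAB x) _
    _ ≤ u ⬝ᵥ (A⁻¹ *ᵥ u) := two_mul_dotProduct_sub_le_dotProduct_inv_mulVec hA u x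

end QuadraticForm

section MNorm

variable {d : ℕ}

lemma mnorm_inv_anti {A B : Matrix (Fin d) (Fin d) ℝ} (hA : A.PosDef) (hB : IsUnit B)
    (hAB : ∀ v, v ⬝ᵥ (A *ᵥ v) ≤ v ⬝ᵥ (B *ᵥ v)) (u : Fin d → ℝ) :
    mnorm B⁻¹ u ≤ mnorm A⁻¹ u :=
  Real.sqrt_le_sqrt (dotProduct_inv_mulVec_anti hA hB hAB u)

lemma mnorm_smul {c : ℝ} (hc : 0 ≤ c) (M : Matrix (Fin d) (Fin d) ℝ) (u : Fin d → ℝ) :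
    mnorm (c • M) u = √c * mnorm M u := by
  rw [mnorm, mnorm, smul_mulVec, dotProduct_smul, smul_eq_mul, Real.sqrt_mul hc]

lemma mnorm_inv_smul {S : Matrix (Fin d) (Fin d) ℝ} (hS : IsUnit S) {c : ℝ} (hc : 0 < c)
    (u : Fin d → ℝ) : mnorm (c • S)⁻¹ u = mnorm S⁻¹ u / √c := by
  rw [show (c • S)⁻¹ = c⁻¹ • S⁻¹ from
      inv_smul' S (Units.mk0 c hc.ne') ((isUnit_iff_isUnit_det S).mp hS),
    mnorm_smul (inv_nonneg.2 hc.le), Real.sqrt_inv, inv_mul_eq_div]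

end MNorm

/-- Two-sided comparison of the elliptical potentials for a rank-one downdate
`Σ₋ = Σ_D − φ₀φ₀ᵀ` and update `Σ₊ = Σ_D + φ₀φ₀ᵀ`. -/
theorem stmt16 {d : ℕ} (SigD : Matrix (Fin d) (Fin d) ℝ) (φ₀ : Fin d → ℝ)
    (hSig : SigD.PosDef) (hφ₀ : φ₀ ⬝ᵥ φ₀ ≤ 1)
    (hSigM : (SigD - vecMulVec φ₀ φ₀).PosDef)
    (lamMin : ℝ) (hlamMin : 1 < lamMin)
    (hray : ∀ v : Fin d → ℝ, lamMin * (v ⬝ᵥ v) ≤ v ⬝ᵥ (SigD *ᵥ v)) :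
    ∀ φ : Fin d → ℝ,
      mnorm SigD⁻¹ φ ≤ mnorm (SigD - vecMulVec φ₀ φ₀)⁻¹ φ ∧
      mnorm (SigD - vecMulVec φ₀ φ₀)⁻¹ φ ≤
        mnorm SigD⁻¹ φ / Real.sqrt (1 - 1 / lamMin) ∧
      mnorm SigD⁻¹ φ / Real.sqrt (1 + 1 / lamMin) ≤
        mnorm (SigD + vecMulVec φ₀ φ₀)⁻¹ φ ∧
      mnorm (SigD + vecMulVec φ₀ φ₀)⁻¹ φ ≤ mnorm SigD⁻¹ φ := by
  intro φ
  have hlam : 0 < lamMin := one_pos.trans hlamMin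
  have hcM : 0 < 1 - 1 / lamMin := sub_pos.2 ((div_lt_one hlam).2 hlamMin)
  have hcP : 0 < 1 + 1 / lamMin := by positivity
  have hrank1 (v : Fin d → ℝ) : (φ₀ ⬝ᵥ v) ^ 2 ≤ 1 / lamMin * (v ⬝ᵥ (SigD *ᵥ v)) := by
    rw [one_div_mul_eq_div, le_div_iff₀ hlam]
    nlinarith [sq_dotProduct_le_dotProduct_self hφ₀ v, hray v]
  have hSigP : (SigD + vecMulVec φ₀ φ₀).PosDef :=
    hSig.add_posSemidef (by simpa using posSemidef_vecMulVec_self_star φ₀)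
  refine ⟨?_, ?_, ?_, ?_⟩
  · refine mnorm_inv_anti hSigM hSig.isUnit (fun v => ?_) φ
    rw [sub_mulVec, dotProduct_sub, dotProduct_vecMulVec_self_mulVec]
    exact sub_le_self _ (sq_nonneg _)
  · rw [← mnorm_inv_smul hSig.isUnit hcM]
    refine mnorm_inv_anti (hSig.smul hcM) hSigM.isUnit (fun v => ?_) φ
    simp only [sub_mulVec, smul_mulVec, dotProduct_sub, dotProduct_smul, smul_eq_mul,
      dotProduct_vecMulVec_self_mulVec]
    linarith [hrank1 v]
  · rw [← mnorm_inv_smul hSig.isUnit hcP]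
    refine mnorm_inv_anti hSigP (hSig.smul hcP).isUnit (fun v => ?_) φ
    simp only [add_mulVec, smul_mulVec, dotProduct_add, dotProduct_smul, smul_eq_mul,
      dotProduct_vecMulVec_self_mulVec]
    linarith [hrank1 v]
  · refine mnorm_inv_anti hSig hSigP.isUnit (fun v => ?_) φ
    rw [add_mulVec, dotProduct_add, dotProduct_vecMulVec_self_mulVec]
    exact le_add_of_nonneg_right (sq_nonneg _)
end
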